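/- arXiv:1607.05325 — 2 statements merged into one kernel-verified Lean document; each statement's English description precedes it below -/
import Mathlib

section
/- The limit as R → ∞ of the ratio (∫_{r=0}^{R} ∫_{ρ=0}^{r} r·ρ·(r − ρ)/(r + ρ) dρ dr) / (∫_{r=0}^{R} ∫_{ρ=0}^{r} r·ρ dρ dr) exists and equals 3 − 4·ln 2. -/
open Filter

lemma inner_num {r : ℝ} (hr : 0 ≤ r) :
    (∫ ρ in (0:ℝ)..r, r * ρ * (r - ρ) / (r + ρ)) = (3/2 - 2 * Real.log 2) * r ^ 3 := by
  rcases eq_or_lt_of_le hr with h | h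
  · rw [← h]; simp
  · have h1 : (∫ ρ in (0:ℝ)..r, r * ρ * (r - ρ) / (r + ρ))
        = ∫ ρ in (0:ℝ)..r, ((2 * r ^ 2 - r * ρ) - 2 * r ^ 3 * (1 / (r + ρ))) := by
      apply intervalIntegral.integral_congr
      intro ρ hρ
      rw [Set.uIcc_of_le hr] at hρ
      have hpos : 0 < r + ρ := by linarith [hρ.1]
      field_simp
      ring
    have hInt1 : IntervalIntegrable (fun ρ : ℝ => 2 * r ^ 2 - r * ρ)
        MeasureTheory.volume 0 r := by
      apply Continuous.intervalIntegrable; continuity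
    have hInt2 : IntervalIntegrable (fun ρ : ℝ => 2 * r ^ 3 * (1 / (r + ρ)))
        MeasureTheory.volume 0 r := by
      apply ContinuousOn.intervalIntegrable
      apply ContinuousOn.mul continuousOn_const
      apply ContinuousOn.div continuousOn_const (continuous_const.add continuous_id).continuousOn
      intro x hx
      rw [Set.uIcc_of_le hr] at hx
      have : 0 < r + x := by linarith [hx.1]
      exact ne_of_gt this
    rw [h1, intervalIntegral.integral_sub hInt1 hInt2]
    have e1 : (∫ ρ in (0:ℝ)..r, (2 * r ^ 2 - r * ρ)) = 2 * r ^ 3 - r * (r ^ 2 / 2) := by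
      rw [intervalIntegral.integral_sub (by apply Continuous.intervalIntegrable; continuity)
        (by apply Continuous.intervalIntegrable; continuity)]
      rw [intervalIntegral.integral_const, intervalIntegral.integral_const_mul,
        integral_id, smul_eq_mul]
      ring
    have e2 : (∫ ρ in (0:ℝ)..r, 2 * r ^ 3 * (1 / (r + ρ)))
        = 2 * r ^ 3 * Real.log 2 := by
      rw [intervalIntegral.integral_const_mul]
      have : (∫ ρ in (0:ℝ)..r, 1 / (r + ρ)) = ∫ x in (r + 0)..(r + r), 1 / x := by
        rw [← intervalIntegral.integral_comp_add_left (fun x => 1 / x) r]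
      rw [this, integral_one_div (by
        intro hx
        rw [Set.uIcc_of_le (by linarith : r + 0 ≤ r + r)] at hx
        linarith [hx.1])]
      have : r + r = 2 * r := by ring
      rw [this, add_zero, mul_div_assoc, div_self (ne_of_gt h), mul_one]
    rw [e1, e2]
    ring

lemma inner_den (r : ℝ) :
    (∫ ρ in (0:ℝ)..r, r * ρ) = r ^ 3 / 2 := by
  rw [intervalIntegral.integral_const_mul, integral_id]
  ring

lemma ratio_eq {R : ℝ} (hR : 0 < R) :
    (∫ r in (0:ℝ)..R, ∫ ρ in (0:ℝ)..r, r * ρ * (r - ρ) / (r + ρ)) /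
      (∫ r in (0:ℝ)..R, ∫ ρ in (0:ℝ)..r, r * ρ) = 3 - 4 * Real.log 2 := by
  have hnum : (∫ r in (0:ℝ)..R, ∫ ρ in (0:ℝ)..r, r * ρ * (r - ρ) / (r + ρ))
      = (3/2 - 2 * Real.log 2) * (R ^ 4 / 4) := by
    have : (∫ r in (0:ℝ)..R, ∫ ρ in (0:ℝ)..r, r * ρ * (r - ρ) / (r + ρ))
        = ∫ r in (0:ℝ)..R, (3/2 - 2 * Real.log 2) * r ^ 3 := by
      apply intervalIntegral.integral_congr
      intro r hr
      rw [Set.uIcc_of_le hR.le] at hr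
      exact inner_num hr.1
    rw [this, intervalIntegral.integral_const_mul, integral_pow]
    norm_num
  have hden : (∫ r in (0:ℝ)..R, ∫ ρ in (0:ℝ)..r, r * ρ) = R ^ 4 / 8 := by
    have : (∫ r in (0:ℝ)..R, ∫ ρ in (0:ℝ)..r, r * ρ)
        = ∫ r in (0:ℝ)..R, r ^ 3 / 2 := by
      apply intervalIntegral.integral_congr
      intro r _
      exact inner_den r
    rw [this]
    rw [show (fun r : ℝ => r ^ 3 / 2) = fun r : ℝ => (1/2 : ℝ) * r ^ 3 by ext r; ring]
    rw [intervalIntegral.integral_const_mul, integral_pow]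
    ring
  rw [hnum, hden]
  have hR4 : R ^ 4 ≠ 0 := by positivity
  field_simp
  ring

theorem mean_deformation_limit :
    Tendsto
      (fun R : ℝ =>
        (∫ r in (0:ℝ)..R, ∫ ρ in (0:ℝ)..r, r * ρ * (r - ρ) / (r + ρ)) /
          (∫ r in (0:ℝ)..R, ∫ ρ in (0:ℝ)..r, r * ρ))
      atTop (nhds (3 - 4 * Real.log 2)) := by
  apply Tendsto.congr' _ tendsto_const_nhds
  filter_upwards [eventually_gt_atTop (0:ℝ)] with R hR
  exact (ratio_eq hR).symm
end

section
/- Let A be a real 3×3 matrix with columns a₁, a₂, a₃. Then the characteristic polynomial of AᵀA equals X³ − (‖a₁‖² + ‖a₂‖² + ‖a₃‖²)·X² + (‖a₂ × a₃‖² + ‖a₁ × a₃‖² + ‖a₁ × a₂‖²)·X − (det A)². -/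
/-!
The coefficients of the characteristic polynomial of a 3×3 matrix are its trace, the sum of its
principal 2×2 minors and its determinant. The Gram matrix `Aᵀ * A` has entries `aᵢ ⬝ᵥ aⱼ`, so its
trace is `∑ ‖aᵢ‖²`, its principal minors are `‖aᵢ‖² ‖aⱼ‖² - (aᵢ ⬝ᵥ aⱼ)² = ‖aᵢ ×₃ aⱼ‖²` by
Lagrange's identity, and its determinant is `(det A)²`.
-/

open Matrix Polynomial

theorem Matrix.charpoly_fin_three {R : Type*} [CommRing R] (M : Matrix (Fin 3) (Fin 3) R) :
    M.charpoly = X ^ 3 - C M.trace * X ^ 2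
      + C (M 1 1 * M 2 2 - M 1 2 * M 2 1 + (M 0 0 * M 2 2 - M 0 2 * M 2 0)
        + (M 0 0 * M 1 1 - M 0 1 * M 1 0)) * X - C M.det := by
  rw [charpoly, det_fin_three, det_fin_three, trace_fin_three]
  simp only [charmatrix_apply, diagonal_apply, Fin.reduceEq, if_true, if_false,
    map_add, map_sub, map_mul]
  ring

theorem EuclideanSpace.norm_equiv_symm_sq {ι : Type*} [Fintype ι] (v : ι → ℝ) :
    ‖(EuclideanSpace.equiv ι ℝ).symm v‖ ^ 2 = v ⬝ᵥ v := by
  rw [EuclideanSpace.real_norm_sq_eq]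
  simp [dotProduct, sq]

theorem cross_dot_cross_self {R : Type*} [CommRing R] (u v : Fin 3 → R) :
    u ⨯₃ v ⬝ᵥ u ⨯₃ v = u ⬝ᵥ u * v ⬝ᵥ v - (u ⬝ᵥ v) ^ 2 := by
  rw [cross_dot_cross, dotProduct_comm v u, sq]

theorem charpoly_transpose_mul_self_3d (A : Matrix (Fin 3) (Fin 3) ℝ)
    (a₁ a₂ a₃ : Fin 3 → ℝ)
    (h1 : a₁ = fun i => A i 0) (h2 : a₂ = fun i => A i 1) (h3 : a₃ = fun i => A i 2) :
    (Aᵀ * A).charpoly =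
      X ^ 3
        - C (‖(EuclideanSpace.equiv (Fin 3) ℝ).symm a₁‖ ^ 2 +
              ‖(EuclideanSpace.equiv (Fin 3) ℝ).symm a₂‖ ^ 2 +
              ‖(EuclideanSpace.equiv (Fin 3) ℝ).symm a₃‖ ^ 2) * X ^ 2
        + C (‖(EuclideanSpace.equiv (Fin 3) ℝ).symm (crossProduct a₂ a₃)‖ ^ 2 +
              ‖(EuclideanSpace.equiv (Fin 3) ℝ).symm (crossProduct a₁ a₃)‖ ^ 2 +
              ‖(EuclideanSpace.equiv (Fin 3) ℝ).symm (crossProduct a₁ a₂)‖ ^ 2) * X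
        - C (A.det ^ 2) := by
  have gram : ∀ i j, (Aᵀ * A) i j = (fun k => A k i) ⬝ᵥ (fun k => A k j) :=
    fun i j => mul_apply' ..
  have det_gram : (Aᵀ * A).det = A.det ^ 2 := by rw [det_mul, det_transpose, sq]
  subst h1 h2 h3
  simp only [EuclideanSpace.norm_equiv_symm_sq, cross_dot_cross_self]
  rw [charpoly_fin_three, trace_fin_three, det_gram]
  simp only [gram, dotProduct_comm (fun k => A k 1) (fun k => A k 0),
    dotProduct_comm (fun k => A k 2) (fun k => A k 0),
    dotProduct_comm (fun k => A k 2) (fun k => A k 1), map_add, map_sub, map_mul, map_pow]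
  ring
end
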